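/- arXiv:2601.21990 — 4 statements merged into one kernel-verified Lean document; each statement's English description precedes it below -/
import Mathlib

section
/- Exact dual infeasibility certificate: let A ∈ ℝ^{m×n}, c ∈ ℝⁿ, with extended constraint bounds l_j ∈ {−∞} ∪ ℝ, u_j ∈ ℝ ∪ {+∞} (l ≤ u) and extended variable bounds x̲_i ∈ {−∞} ∪ ℝ, x̄_i ∈ ℝ ∪ {+∞} (x̲ ≤ x̄). Suppose δx ∈ ℝⁿ satisfies cᵀδx < 0, δx ∈ R_{[x̲,x̄]}, and A·δx ∈ R_{[l,u]}. Then there exists no pair (y, r) ∈ ℝᵐ × ℝⁿ with c + Aᵀy + r = 0, y ∈ B_{[l,u]}, and r ∈ B_{[x̲,x̄]}; i.e., the dual LP is infeasible. -/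
open BigOperators Matrix

/-- The barrier cone `B_{[a,b]}` of the (possibly unbounded) box with extended bounds. -/
def barrierCone {n : ℕ} (a b : Fin n → EReal) : Set (Fin n → ℝ) :=
  {v | ∀ i, (a i = ⊥ → 0 ≤ v i) ∧ (b i = ⊤ → v i ≤ 0)}

/-- The recession cone `R_{[a,b]}` of the (possibly unbounded) box with extended bounds. -/
def recCone {n : ℕ} (a b : Fin n → EReal) : Set (Fin n → ℝ) :=
  {d | ∀ i,
    (b i = ⊤ → a i ≠ ⊥ → 0 ≤ d i) ∧
    (a i = ⊥ → b i ≠ ⊤ → d i ≤ 0) ∧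
    (a i ≠ ⊥ → b i ≠ ⊤ → d i = 0)}

private lemma prod_nonpos_aux (a b : EReal) (y d : ℝ)
    (hy1 : a = ⊥ → 0 ≤ y) (hy2 : b = ⊤ → y ≤ 0)
    (hd1 : b = ⊤ → a ≠ ⊥ → 0 ≤ d) (hd2 : a = ⊥ → b ≠ ⊤ → d ≤ 0)
    (hd3 : a ≠ ⊥ → b ≠ ⊤ → d = 0) : y * d ≤ 0 := by
  by_cases ha : a = ⊥ <;> by_cases hb : b = ⊤
  · have : y = 0 := le_antisymm (hy2 hb) (hy1 ha)
    simp [this]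
  · exact mul_nonpos_of_nonneg_of_nonpos (hy1 ha) (hd2 ha hb)
  · exact mul_nonpos_of_nonpos_of_nonneg (hy2 hb) (hd1 hb ha)
  · simp [hd3 ha hb]

/-- **Exact dual infeasibility certificate.**
If `δx ∈ ℝⁿ` satisfies `cᵀδx < 0`, `δx ∈ R_{[x̲,x̄]}`, and `A·δx ∈ R_{[l,u]}`, then the dual
LP is infeasible: there exists no pair `(y, r)` with `c + Aᵀy + r = 0`, `y ∈ B_{[l,u]}`, and
`r ∈ B_{[x̲,x̄]}`. -/
theorem dual_infeasibility_certificate {m n : ℕ} (A : Matrix (Fin m) (Fin n) ℝ)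
    (c : Fin n → ℝ)
    (l u : Fin m → EReal) (xlo xhi : Fin n → EReal)
    (hl : ∀ j, l j ≠ ⊤) (hu : ∀ j, u j ≠ ⊥) (hlu : ∀ j, l j ≤ u j)
    (hxlo : ∀ i, xlo i ≠ ⊤) (hxhi : ∀ i, xhi i ≠ ⊥) (hx : ∀ i, xlo i ≤ xhi i)
    (δx : Fin n → ℝ)
    (hobj : ∑ i, c i * δx i < 0)
    (hδx : δx ∈ recCone xlo xhi)
    (hAδx : A.mulVec δx ∈ recCone l u) :
    ¬ ∃ (y : Fin m → ℝ) (r : Fin n → ℝ),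
        c + Aᵀ.mulVec y + r = 0 ∧ y ∈ barrierCone l u ∧ r ∈ barrierCone xlo xhi := by
  rintro ⟨y, r, heq, hy, hr⟩
  have hc : ∀ i, c i = -(Aᵀ.mulVec y) i - r i := by
    intro i
    have := congrFun heq i
    simp only [Pi.add_apply, Pi.zero_apply] at this
    linarith
  have hsum : ∑ i, c i * δx i
      = -(y ⬝ᵥ A.mulVec δx) - ∑ i, r i * δx i := by
    have h1 : ∑ i, (Aᵀ.mulVec y) i * δx i = y ⬝ᵥ A.mulVec δx := by
      have : Aᵀ.mulVec y ⬝ᵥ δx = y ⬝ᵥ A.mulVec δx := by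
        rw [Matrix.mulVec_transpose, ← Matrix.dotProduct_mulVec]
      simpa [dotProduct] using this
    calc ∑ i, c i * δx i = ∑ i, (-(Aᵀ.mulVec y) i - r i) * δx i := by
          simp_rw [← hc]
      _ = -(∑ i, (Aᵀ.mulVec y) i * δx i) - ∑ i, r i * δx i := by
          rw [← Finset.sum_neg_distrib, ← Finset.sum_sub_distrib]
          congr 1; ext i; ring
      _ = -(y ⬝ᵥ A.mulVec δx) - ∑ i, r i * δx i := by rw [h1]
  have hyA : y ⬝ᵥ A.mulVec δx ≤ 0 := by
    apply Finset.sum_nonpos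
    intro j _
    exact prod_nonpos_aux (l j) (u j) (y j) (A.mulVec δx j)
      (hy j).1 (hy j).2 (hAδx j).1 (hAδx j).2.1 (hAδx j).2.2
  have hrx : ∑ i, r i * δx i ≤ 0 := by
    apply Finset.sum_nonpos
    intro i _
    exact prod_nonpos_aux (xlo i) (xhi i) (r i) (δx i)
      (hr i).1 (hr i).2 (hδx i).1 (hδx i).2.1 (hδx i).2.2
  linarith [hsum ▸ hobj]
end

section
/- Positive definiteness of the PDHG metric: let A ∈ ℝ^{m×n}, η > 0, w > 0, and suppose η·‖A‖₂ < 1, where ‖A‖₂ is the spectral norm (largest singular value) of A. Then the symmetric (n+m)×(n+m) block matrix M = [[(w/η)·Iₙ, Aᵀ], [A, (1/(ηw))·Iₘ]] is positive definite. -/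
open BigOperators Matrix

/-- The spectral norm (largest singular value) of a real matrix `A ∈ ℝ^{m×n}`: the operator
norm of the induced linear map between Euclidean spaces. -/
noncomputable def matrixSpectralNorm {m n : ℕ} (A : Matrix (Fin m) (Fin n) ℝ) : ℝ :=
  ‖LinearMap.toContinuousLinearMap (Matrix.toEuclideanLin A)‖

/-- The PDHG metric matrix `M = [[(w/η)·Iₙ, Aᵀ], [A, (1/(ηw))·Iₘ]]`. -/
noncomputable def pdhgMetric {m n : ℕ} (A : Matrix (Fin m) (Fin n) ℝ) (η w : ℝ) :
    Matrix (Fin n ⊕ Fin m) (Fin n ⊕ Fin m) ℝ :=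
  Matrix.fromBlocks ((w / η) • (1 : Matrix (Fin n) (Fin n) ℝ)) Aᵀ
    A ((1 / (η * w)) • (1 : Matrix (Fin m) (Fin m) ℝ))

/-!
Writing `x = (u, v)`, the quadratic form of `M` is
`(w/η)‖u‖² + 2⟪v, A u⟫ + ‖v‖²/(ηw)`. The cross term is at least `-2‖A‖₂‖u‖‖v‖`, and by AM-GM
`2‖u‖‖v‖ ≤ η ((w/η)‖u‖² + ‖v‖²/(ηw))`, so the form dominates
`(1 - η‖A‖₂) ((w/η)‖u‖² + ‖v‖²/(ηw))`, which is positive for `x ≠ 0`.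
-/

open WithLp

lemma norm_toLp_sq_eq_dotProduct_self {ι : Type*} [Fintype ι] (x : ι → ℝ) :
    ‖toLp 2 x‖ ^ 2 = x ⬝ᵥ x := by
  rw [← real_inner_self_eq_norm_sq, EuclideanSpace.inner_toLp_toLp, star_trivial]

lemma abs_dotProduct_mulVec_le_matrixSpectralNorm {m n : ℕ} (A : Matrix (Fin m) (Fin n) ℝ)
    (u : Fin n → ℝ) (v : Fin m → ℝ) :
    |v ⬝ᵥ (A *ᵥ u)| ≤ matrixSpectralNorm A * ‖toLp 2 u‖ * ‖toLp 2 v‖ := by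
  have hinner : v ⬝ᵥ (A *ᵥ u) = inner ℝ (toLp 2 v) (toEuclideanLin A (toLp 2 u)) := by
    rw [dotProduct_comm]
    rfl
  calc |v ⬝ᵥ (A *ᵥ u)| ≤ ‖toLp 2 v‖ * ‖toEuclideanLin A (toLp 2 u)‖ :=
        hinner ▸ abs_real_inner_le_norm _ _
    _ ≤ ‖toLp 2 v‖ * (matrixSpectralNorm A * ‖toLp 2 u‖) := by
        gcongr
        exact (toEuclideanLin A).toContinuousLinearMap.le_opNorm _
    _ = matrixSpectralNorm A * ‖toLp 2 u‖ * ‖toLp 2 v‖ := by ring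

lemma one_sub_mul_le_pdhg_quadratic {η w σ a b t : ℝ} (hη : 0 < η) (hw : 0 < w) (hσ : 0 ≤ σ)
    (ht : -(σ * a * b) ≤ t) :
    (1 - η * σ) * (w / η * a ^ 2 + b ^ 2 / (η * w)) ≤ w / η * a ^ 2 + 2 * t + b ^ 2 / (η * w) := by
  have amgm : 2 * a * b ≤ η * (w / η * a ^ 2 + b ^ 2 / (η * w)) := by
    have hgap : η * (w / η * a ^ 2 + b ^ 2 / (η * w)) - 2 * a * b = (w * a - b) ^ 2 / w := by
      field_simp
      ring
    nlinarith [div_nonneg (sq_nonneg (w * a - b)) hw.le]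
  nlinarith [mul_le_mul_of_nonneg_left amgm hσ]

lemma pdhgMetric_isHermitian {m n : ℕ} (A : Matrix (Fin m) (Fin n) ℝ) (η w : ℝ) :
    (pdhgMetric A η w).IsHermitian :=
  IsHermitian.fromBlocks (by simp [IsHermitian]) (by simp) (by simp [IsHermitian])

lemma sumElim_dotProduct_pdhgMetric_mulVec {m n : ℕ} (A : Matrix (Fin m) (Fin n) ℝ) (η w : ℝ)
    (u : Fin n → ℝ) (v : Fin m → ℝ) :
    (u ⊕ᵥ v) ⬝ᵥ (pdhgMetric A η w *ᵥ (u ⊕ᵥ v)) =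
      w / η * ‖toLp 2 u‖ ^ 2 + 2 * (v ⬝ᵥ (A *ᵥ u)) + ‖toLp 2 v‖ ^ 2 / (η * w) := by
  rw [pdhgMetric, fromBlocks_mulVec, sumElim_dotProduct_sumElim, Sum.elim_comp_inl,
    Sum.elim_comp_inr, norm_toLp_sq_eq_dotProduct_self, norm_toLp_sq_eq_dotProduct_self,
    smul_mulVec, smul_mulVec, one_mulVec, one_mulVec,
    dotProduct_add, dotProduct_add, dotProduct_smul, dotProduct_smul, mulVec_transpose,
    dotProduct_comm u (v ᵥ* A), ← dotProduct_mulVec]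
  simp only [smul_eq_mul]
  ring

/-- **Positive definiteness of the PDHG metric.**
If `η > 0`, `w > 0` and `η·‖A‖₂ < 1`, then the symmetric block matrix
`M = [[(w/η)·Iₙ, Aᵀ], [A, (1/(ηw))·Iₘ]]` is positive definite. -/
theorem pdhgMetric_posDef {m n : ℕ} (A : Matrix (Fin m) (Fin n) ℝ) (η w : ℝ)
    (hη : 0 < η) (hw : 0 < w) (hA : η * matrixSpectralNorm A < 1) :
    (pdhgMetric A η w).PosDef := by
  refine posDef_iff_dotProduct_mulVec.2 ⟨pdhgMetric_isHermitian A η w, fun x hx => ?_⟩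
  have huv : x ∘ Sum.inl ≠ 0 ∨ x ∘ Sum.inr ≠ 0 := by
    by_contra! h
    exact hx (by rw [← Sum.elim_comp_inl_inr x, h.1, h.2, Sum.elim_zero_zero])
  rw [star_trivial, ← Sum.elim_comp_inl_inr x, sumElim_dotProduct_pdhgMetric_mulVec]
  set u := x ∘ Sum.inl
  set v := x ∘ Sum.inr
  have hpos : 0 < w / η * ‖toLp 2 u‖ ^ 2 + ‖toLp 2 v‖ ^ 2 / (η * w) := by
    rcases huv with hu | hv
    · have : 0 < ‖toLp 2 u‖ := by simpa using hu
      positivity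
    · have : 0 < ‖toLp 2 v‖ := by simpa using hv
      positivity
  calc 0 < (1 - η * matrixSpectralNorm A) * (w / η * ‖toLp 2 u‖ ^ 2 + ‖toLp 2 v‖ ^ 2 / (η * w)) :=
        mul_pos (sub_pos.2 hA) hpos
    _ ≤ _ := one_sub_mul_le_pdhg_quadratic hη hw (norm_nonneg _)
        (neg_le_of_abs_le (abs_dotProduct_mulVec_le_matrixSpectralNorm A u v))
end

section
/- Fixed points of the PDHG operator are optimal: let A ∈ ℝ^{m×n}, c ∈ ℝⁿ, finite bounds l ≤ u in ℝᵐ and x̲ ≤ x̄ in ℝⁿ, and step sizes τ > 0, σ > 0. Suppose (x, y) ∈ ℝⁿ × ℝᵐ satisfies T(x, y) = (x, y), where T(x,y) = (x⁺, y⁺) with x⁺ = Π_{[x̲,x̄]}(x − τ(c + Aᵀy)) and y⁺ = y + σA(2x⁺ − x) − σΠ_{[l,u]}(σ⁻¹y + A(2x⁺ − x)). Then x is feasible (l ≤ Ax ≤ u and x̲ ≤ x ≤ x̄) and optimal for the primal LP, and setting r = −c − Aᵀy, the duality gap vanishes: cᵀx = −φ_{[x̲,x̄]}(r) − φ_{[l,u]}(y).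 -/
open BigOperators Matrix

/-- Componentwise clamp onto `[a, b]`: the Euclidean projection onto a box. -/
def clamp (a b t : ℝ) : ℝ := max (min t b) a

/-- The support function of a box with finite bounds `a ≤ b`:
`φ_{[a,b]}(v) = bᵀv₊ + aᵀv₋`. -/
def phiBox {n : ℕ} (a b : Fin n → ℝ) (v : Fin n → ℝ) : ℝ :=
  ∑ i, b i * max (v i) 0 + ∑ i, a i * min (v i) 0

/-- The primal update of the PDHG operator:
`x⁺ = Π_{[x̲,x̄]}(x − τ(c + Aᵀy))`. -/
def pdhgX {m n : ℕ} (A : Matrix (Fin m) (Fin n) ℝ) (c : Fin n → ℝ)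
    (xlo xhi : Fin n → ℝ) (τ : ℝ) (x : Fin n → ℝ) (y : Fin m → ℝ) : Fin n → ℝ :=
  fun i => clamp (xlo i) (xhi i) (x i - τ * (c i + Aᵀ.mulVec y i))

/-- The dual update of the PDHG operator:
`y⁺ = y + σA(2x⁺ − x) − σΠ_{[l,u]}(σ⁻¹y + A(2x⁺ − x))`. -/
noncomputable def pdhgY {m n : ℕ} (A : Matrix (Fin m) (Fin n) ℝ) (c : Fin n → ℝ)
    (l u : Fin m → ℝ) (xlo xhi : Fin n → ℝ) (τ σ : ℝ)
    (x : Fin n → ℝ) (y : Fin m → ℝ) : Fin m → ℝ :=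
  fun j =>
    y j + σ * A.mulVec (fun i => 2 * pdhgX A c xlo xhi τ x y i - x i) j
      - σ * clamp (l j) (u j)
          (σ⁻¹ * y j + A.mulVec (fun i => 2 * pdhgX A c xlo xhi τ x y i - x i) j)

/-- A fixed point of the clamp at `s + d` pins down where `s` sits in `[a,b]`. -/
lemma clamp_fix {a b s d : ℝ} (hab : a ≤ b) (h : clamp a b (s + d) = s) :
    a ≤ s ∧ s ≤ b ∧ (0 < d → s = b) ∧ (d < 0 → s = a) := by
  unfold clamp at h
  have h1 : a ≤ s := h ▸ le_max_right _ _
  have h2 : s ≤ b := h ▸ max_le (le_trans (min_le_right _ _) le_rfl) hab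
  refine ⟨h1, h2, ?_, ?_⟩
  · intro hd
    by_contra hne
    have hsb : s < b := lt_of_le_of_ne h2 hne
    have hlt : s < max (min (s + d) b) a :=
      lt_of_lt_of_le (lt_min (by linarith) hsb) (le_max_left _ _)
    rw [h] at hlt; exact lt_irrefl _ hlt
  · intro hd
    by_contra hne
    have hsa : a < s := lt_of_le_of_ne h1 (Ne.symm hne)
    have hlt : max (min (s + d) b) a < s :=
      max_lt (lt_of_le_of_lt (min_le_left _ _) (by linarith)) hsa
    rw [h] at hlt; exact lt_irrefl _ hlt

/-- The complementarity consequences: the product identity and maximality. -/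
lemma box_prod {a b s v : ℝ} (h1 : a ≤ s) (h2 : s ≤ b)
    (hp : 0 < v → s = b) (hm : v < 0 → s = a) :
    s * v = b * max v 0 + a * min v 0 ∧
      ∀ s', a ≤ s' → s' ≤ b → s' * v ≤ s * v := by
  rcases lt_trichotomy v 0 with hv | hv | hv
  · rw [hm hv]
    refine ⟨by rw [max_eq_right hv.le, min_eq_left hv.le]; ring, ?_⟩
    intro s' h1' _; nlinarith
  · subst hv; simp
  · rw [hp hv]
    refine ⟨by rw [max_eq_left hv.le, min_eq_right hv.le]; ring, ?_⟩
    intro s' _ h2'; nlinarith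

/-- **Fixed points of the PDHG operator are optimal.**
If `(x, y)` is a fixed point of the PDHG operator `T` with step sizes `τ, σ > 0`, then `x` is
feasible and optimal for the primal LP, and with `r = −c − Aᵀy` the duality gap vanishes:
`cᵀx = −φ_{[x̲,x̄]}(r) − φ_{[l,u]}(y)`. -/
theorem pdhg_fixed_point_optimal {m n : ℕ} (A : Matrix (Fin m) (Fin n) ℝ) (c : Fin n → ℝ)
    (l u : Fin m → ℝ) (xlo xhi : Fin n → ℝ)
    (hlu : ∀ j, l j ≤ u j) (hbx : ∀ i, xlo i ≤ xhi i)
    (τ σ : ℝ) (hτ : 0 < τ) (hσ : 0 < σ)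
    (x : Fin n → ℝ) (y : Fin m → ℝ)
    (hfix : pdhgX A c xlo xhi τ x y = x ∧ pdhgY A c l u xlo xhi τ σ x y = y)
    (r : Fin n → ℝ) (hr : r = -c - Aᵀ.mulVec y) :
    (∀ j, l j ≤ A.mulVec x j ∧ A.mulVec x j ≤ u j) ∧
    (∀ i, xlo i ≤ x i ∧ x i ≤ xhi i) ∧
    (∀ x' : Fin n → ℝ,
        (∀ j, l j ≤ A.mulVec x' j ∧ A.mulVec x' j ≤ u j) →
        (∀ i, xlo i ≤ x' i ∧ x' i ≤ xhi i) →
        ∑ i, c i * x i ≤ ∑ i, c i * x' i) ∧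
    (∑ i, c i * x i = -phiBox xlo xhi r - phiBox l u y) := by
  obtain ⟨hfx, hfy⟩ := hfix
  have hri : ∀ i, r i = -c i - Aᵀ.mulVec y i := by
    intro i; rw [hr]; simp
  have hci : ∀ i, c i = -r i - Aᵀ.mulVec y i := by
    intro i; rw [hri i]; ring
  -- componentwise fixed point for x
  have hX : ∀ i, clamp (xlo i) (xhi i) (x i + τ * r i) = x i := by
    intro i
    have h := congrFun hfx i
    simp only [pdhgX] at h
    have harg : x i + τ * r i = x i - τ * (c i + Aᵀ.mulVec y i) := by
      rw [hri i]; ring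
    rw [harg]; exact h
  -- componentwise fixed point for y
  have hvec : (fun i => 2 * pdhgX A c xlo xhi τ x y i - x i) = x := by
    funext i; rw [hfx]; ring
  have hY : ∀ j, clamp (l j) (u j) (A.mulVec x j + σ⁻¹ * y j) = A.mulVec x j := by
    intro j
    have h := congrFun hfy j
    simp only [pdhgY, hvec] at h
    have h2 : σ * clamp (l j) (u j) (σ⁻¹ * y j + A.mulVec x j) = σ * A.mulVec x j := by
      linarith
    have h3 := mul_left_cancel₀ (ne_of_gt hσ) h2
    rw [show A.mulVec x j + σ⁻¹ * y j = σ⁻¹ * y j + A.mulVec x j by ring]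
    exact h3
  -- per-coordinate facts for x
  have hXfacts : ∀ i,
      xlo i ≤ x i ∧ x i ≤ xhi i ∧
      x i * r i = xhi i * max (r i) 0 + xlo i * min (r i) 0 ∧
      ∀ s', xlo i ≤ s' → s' ≤ xhi i → s' * r i ≤ x i * r i := by
    intro i
    obtain ⟨h1, h2, hp, hm⟩ := clamp_fix (hbx i) (hX i)
    have hp' : 0 < r i → x i = xhi i := fun h => hp (mul_pos hτ h)
    have hm' : r i < 0 → x i = xlo i := fun h => hm (mul_neg_of_pos_of_neg hτ h)
    obtain ⟨he, hle⟩ := box_prod h1 h2 hp' hm'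
    exact ⟨h1, h2, he, hle⟩
  -- per-coordinate facts for y
  have hYfacts : ∀ j,
      l j ≤ A.mulVec x j ∧ A.mulVec x j ≤ u j ∧
      A.mulVec x j * y j = u j * max (y j) 0 + l j * min (y j) 0 ∧
      ∀ s', l j ≤ s' → s' ≤ u j → s' * y j ≤ A.mulVec x j * y j := by
    intro j
    obtain ⟨h1, h2, hp, hm⟩ := clamp_fix (hlu j) (hY j)
    have hσ' : 0 < σ⁻¹ := inv_pos.mpr hσ
    have hp' : 0 < y j → A.mulVec x j = u j := fun h => hp (mul_pos hσ' h)
    have hm' : y j < 0 → A.mulVec x j = l j := fun h => hm (mul_neg_of_pos_of_neg hσ' h)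
    obtain ⟨he, hle⟩ := box_prod h1 h2 hp' hm'
    exact ⟨h1, h2, he, hle⟩
  -- transpose dot-product identity
  have htr : ∀ z : Fin n → ℝ,
      ∑ i, Aᵀ.mulVec y i * z i = ∑ j, A.mulVec z j * y j := by
    intro z
    simp only [Matrix.mulVec, dotProduct, Matrix.transpose_apply]
    simp_rw [Finset.sum_mul]
    rw [Finset.sum_comm]
    apply Finset.sum_congr rfl; intro j _
    apply Finset.sum_congr rfl; intro i _; ring
  -- objective value identity for any vector z
  have hobj : ∀ z : Fin n → ℝ,
      ∑ i, c i * z i = -(∑ i, z i * r i) - ∑ j, A.mulVec z j * y j := by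
    intro z
    rw [← htr z, ← Finset.sum_neg_distrib, ← Finset.sum_sub_distrib]
    apply Finset.sum_congr rfl; intro i _
    rw [hci i]; ring
  have hS1 : ∑ i, x i * r i = phiBox xlo xhi r := by
    rw [phiBox, ← Finset.sum_add_distrib]
    exact Finset.sum_congr rfl fun i _ => (hXfacts i).2.2.1
  have hS2 : ∑ j, A.mulVec x j * y j = phiBox l u y := by
    rw [phiBox, ← Finset.sum_add_distrib]
    exact Finset.sum_congr rfl fun j _ => (hYfacts j).2.2.1
  refine ⟨fun j => ⟨(hYfacts j).1, (hYfacts j).2.1⟩,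
          fun i => ⟨(hXfacts i).1, (hXfacts i).2.1⟩, ?_, ?_⟩
  · intro x' hfeas hbox
    rw [hobj x, hobj x']
    have h1 : ∑ i, x' i * r i ≤ ∑ i, x i * r i :=
      Finset.sum_le_sum fun i _ => (hXfacts i).2.2.2 _ (hbox i).1 (hbox i).2
    have h2 : ∑ j, A.mulVec x' j * y j ≤ ∑ j, A.mulVec x j * y j :=
      Finset.sum_le_sum fun j _ => (hYfacts j).2.2.2 _ (hfeas j).1 (hfeas j).2
    linarith
  · rw [hobj x, hS1, hS2]
end

section
/- Halpern iteration residual rate: let H be a real inner product space, T : H → H nonexpansive (‖T(u) − T(v)‖ ≤ ‖u − v‖ for all u, v), and z⋆ ∈ H a fixed point of T. Given z⁰ ∈ H, define the Halpern iterates z^{k+1} = (1/(k+2))·z⁰ + ((k+1)/(k+2))·T(z^k) for k ≥ 0. Then for every k ≥ 0: ‖z^k − T(z^k)‖ ≤ 2‖z⁰ − z⋆‖/(k+1). -/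
/-!
Write `R = id - T`. Nonexpansiveness of `T` in an inner product space is equivalent to
`‖R x - R y‖² ≤ 2 ⟪R x - R y, x - y⟫`. Applied to consecutive iterates, this propagates the
invariant `(k / 2) ‖R zₖ‖² ≤ ⟪R zₖ, z⁰ - zₖ⟫`; applied to `zₖ` and `z⋆` (where `R z⋆ = 0`) it
gives `‖R zₖ‖² ≤ 2 ⟪R zₖ, zₖ - z⋆⟫`. Adding the two yields
`((k + 1) / 2) ‖R zₖ‖² ≤ ⟪R zₖ, z⁰ - z⋆⟫ ≤ ‖R zₖ‖ ‖z⁰ - z⋆‖`.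
-/

open RealInnerProductSpace

section Halpern

variable {H : Type*} [NormedAddCommGroup H] [InnerProductSpace ℝ H]
  {T : H → H} {z0 : H} {z : ℕ → H}

theorem sq_norm_sub_residual_le_two_inner (hT : ∀ u v : H, ‖T u - T v‖ ≤ ‖u - v‖)
    (x y : H) : ‖(x - T x) - (y - T y)‖ ^ 2 ≤ 2 * ⟪(x - T x) - (y - T y), x - y⟫ := by
  have hsq : ‖T x - T y‖ ^ 2 ≤ ‖x - y‖ ^ 2 := pow_le_pow_left₀ (norm_nonneg _) (hT x y) 2
  rw [show T x - T y = (x - y) - ((x - T x) - (y - T y)) by abel, norm_sub_sq_real,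
    real_inner_comm] at hsq
  linarith

theorem half_mul_sq_norm_le_inner_add (t : ℝ) {r r' w : H}
    (hstep : (t + 2) * ‖r' - r‖ ^ 2 ≤ 2 * ⟪r' - r, w - (t + 1) • r⟫)
    (hprev : t / 2 * ‖r‖ ^ 2 ≤ ⟪r, w⟫) :
    (t + 2) / 2 * ‖r'‖ ^ 2 ≤ ⟪r', w + r⟫ := by
  rw [norm_sub_sq_real] at hstep
  simp only [inner_sub_left, inner_sub_right, inner_add_right, real_inner_smul_right,
    real_inner_self_eq_norm_sq, real_inner_comm r r'] at hstep ⊢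
  nlinarith

theorem halpern_smul_succ_sub
    (hrec : ∀ k : ℕ,
      z (k + 1) = (1 / ((k : ℝ) + 2)) • z0 + (((k : ℝ) + 1) / ((k : ℝ) + 2)) • T (z k))
    (k : ℕ) :
    ((k : ℝ) + 2) • (z (k + 1) - z k) = (z0 - z k) - ((k : ℝ) + 1) • (z k - T (z k)) := by
  have : (k : ℝ) + 2 ≠ 0 := by positivity
  rw [hrec k]
  match_scalars <;> field_simp; ring

theorem halpern_smul_anchor_sub_succ
    (hrec : ∀ k : ℕ,
      z (k + 1) = (1 / ((k : ℝ) + 2)) • z0 + (((k : ℝ) + 1) / ((k : ℝ) + 2)) • T (z k))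
    (k : ℕ) :
    ((k : ℝ) + 2) • (z0 - z (k + 1)) = ((k : ℝ) + 1) • ((z0 - z k) + (z k - T (z k))) := by
  have : (k : ℝ) + 2 ≠ 0 := by positivity
  rw [hrec k]
  match_scalars <;> field_simp <;> ring

theorem halpern_half_mul_sq_norm_residual_le_inner
    (hT : ∀ u v : H, ‖T u - T v‖ ≤ ‖u - v‖) (h0 : z 0 = z0)
    (hrec : ∀ k : ℕ,
      z (k + 1) = (1 / ((k : ℝ) + 2)) • z0 + (((k : ℝ) + 1) / ((k : ℝ) + 2)) • T (z k))
    (k : ℕ) : (k : ℝ) / 2 * ‖z k - T (z k)‖ ^ 2 ≤ ⟪z k - T (z k), z0 - z k⟫ := by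
  induction k with
  | zero => simp [h0]
  | succ k ih =>
    have hpos : (0 : ℝ) < (k : ℝ) + 2 := by positivity
    have hstep : ((k : ℝ) + 2) * ‖(z (k + 1) - T (z (k + 1))) - (z k - T (z k))‖ ^ 2
        ≤ 2 * ⟪(z (k + 1) - T (z (k + 1))) - (z k - T (z k)),
            (z0 - z k) - ((k : ℝ) + 1) • (z k - T (z k))⟫ := by
      calc _ ≤ ((k : ℝ) + 2) * (2 * ⟪(z (k + 1) - T (z (k + 1))) - (z k - T (z k)),
                z (k + 1) - z k⟫) :=
            mul_le_mul_of_nonneg_left (sq_norm_sub_residual_le_two_inner hT _ _) hpos.le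
        _ = _ := by rw [← halpern_smul_succ_sub hrec, real_inner_smul_right]; ring
    have hnext := half_mul_sq_norm_le_inner_add (k : ℝ) hstep ih
    rw [← mul_le_mul_iff_right₀ hpos, ← real_inner_smul_right, halpern_smul_anchor_sub_succ hrec,
      real_inner_smul_right]
    push_cast
    nlinarith

end Halpern

/-- **Halpern iteration residual rate.**
Let `H` be a real inner product space, `T : H → H` nonexpansive, and `z⋆` a fixed point of
`T`. Given `z⁰`, the Halpern iterates `z^{k+1} = (1/(k+2))·z⁰ + ((k+1)/(k+2))·T(z^k)` satisfy
`‖z^k − T(z^k)‖ ≤ 2‖z⁰ − z⋆‖/(k+1)` for every `k ≥ 0`. -/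
theorem halpern_residual_rate {H : Type*} [NormedAddCommGroup H] [InnerProductSpace ℝ H]
    (T : H → H) (hT : ∀ u v : H, ‖T u - T v‖ ≤ ‖u - v‖)
    (zstar : H) (hfix : T zstar = zstar)
    (z0 : H) (z : ℕ → H) (h0 : z 0 = z0)
    (hrec : ∀ k : ℕ,
      z (k + 1) = (1 / ((k : ℝ) + 2)) • z0 + (((k : ℝ) + 1) / ((k : ℝ) + 2)) • T (z k)) :
    ∀ k : ℕ, ‖z k - T (z k)‖ ≤ 2 * ‖z0 - zstar‖ / ((k : ℝ) + 1) := by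
  intro k
  have hinv := halpern_half_mul_sq_norm_residual_le_inner hT h0 hrec k
  have hfixed := sq_norm_sub_residual_le_two_inner hT (z k) zstar
  rw [hfix, sub_self, sub_zero] at hfixed
  have hsplit : ⟪z k - T (z k), z0 - zstar⟫
      = ⟪z k - T (z k), z k - zstar⟫ + ⟪z k - T (z k), z0 - z k⟫ := by
    rw [← inner_add_right]; congr 1; abel
  have hsum : ((k : ℝ) + 1) / 2 * ‖z k - T (z k)‖ ^ 2 ≤ ‖z k - T (z k)‖ * ‖z0 - zstar‖ := by
    nlinarith [real_inner_le_norm (z k - T (z k)) (z0 - zstar)]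
  rw [le_div_iff₀ (by positivity)]
  nlinarith [norm_nonneg (z k - T (z k)), norm_nonneg (z0 - zstar)]
end
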